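/- arXiv:1509.06150 — 3 statements merged into one kernel-verified Lean document; each statement's English description precedes it below -/
import Mathlib

section
/- Let W = (𝒫, n) be a well-defined Wilson loop diagram and let M be its matroid M(W). If C ⊆ Fin n is a union of circuits of M (a cyclic set), then rk(C) = |Prop(C)|. -/
open Matroid Set

/-- The support of a propagator: its two endpoints and their cyclic successors. -/
def Vp (n : ℕ) [NeZero n] (p : Fin n × Fin n) : Set (Fin n) :=
  {p.1, p.1 + 1, p.2, p.2 + 1}

/-- The support of a set of propagators. -/
def VP (n : ℕ) [NeZero n] (P : Set (Fin n × Fin n)) : Set (Fin n) :=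
  ⋃ p ∈ P, Vp n p

/-- `propsOf n Ps S` is `Prop(S)`: the propagators of `Ps` whose support meets `S`. -/
def propsOf (n : ℕ) [NeZero n] (Ps : Set (Fin n × Fin n)) (S : Set (Fin n)) :
    Set (Fin n × Fin n) :=
  {p ∈ Ps | (Vp n p ∩ S).Nonempty}

/-- A Wilson loop diagram `(Ps, n)` is well defined if `|V_P| ≥ |P| + 3`
for every nonempty `P ⊆ Ps`. -/
def WellDefinedWLD (n : ℕ) [NeZero n] (Ps : Set (Fin n × Fin n)) : Prop :=
  ∀ P ⊆ Ps, P.Nonempty → P.ncard + 3 ≤ (VP n P).ncard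
/-- A circuit of a matroid: a minimal dependent set. -/
def Matroid.IsCircuitOf {α : Type*} (M : Matroid α) (C : Set α) : Prop :=
  M.Dep C ∧ ∀ D ⊂ C, ¬ M.Dep D

/-- A union of circuits (a cyclic set) of a matroid. -/
def Matroid.UnionOfCircuits {α : Type*} (M : Matroid α) (C : Set α) : Prop :=
  ∃ 𝒞 : Set (Set α), (∀ D ∈ 𝒞, M.IsCircuitOf D) ∧ C = ⋃₀ 𝒞

/-- A matroid is connected if its ground set is nonempty and any two elements of the
ground set are equal or lie on a common circuit. -/
def Matroid.Conn {α : Type*} (M : Matroid α) : Prop :=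
  M.E.Nonempty ∧ ∀ x ∈ M.E, ∀ y ∈ M.E, x = y ∨ ∃ C, M.IsCircuitOf C ∧ x ∈ C ∧ y ∈ C

/-- The rank of a set in a matroid: the maximal size of an independent subset. -/
noncomputable def Matroid.rk' {α : Type*} (M : Matroid α) (X : Set α) : ℕ :=
  sSup (Set.ncard '' {I | M.Indep I ∧ I ⊆ X})

/-- Contraction of a matroid by a set, defined via duality. -/
def Matroid.contractBy {α : Type*} (M : Matroid α) (C : Set α) : Matroid α :=
  (M✶ ↾ (M.E \ C))✶

/-- The propagator flat `F(P)`: vertices supporting only propagators in `P`. -/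
def FP (n : ℕ) [NeZero n] (Ps P : Set (Fin n × Fin n)) : Set (Fin n) :=
  VP n P \ VP n (Ps \ P)

section Aux

variable (n : ℕ) [NeZero n] (Ps : Set (Fin n × Fin n))

/-- Integer-valued deficiency `|U| - |Prop(U)|`. -/
noncomputable def defi (U : Set (Fin n)) : ℤ :=
  (U.ncard : ℤ) - (propsOf n Ps U).ncard

variable {n Ps}

lemma propsOf_mono {U S : Set (Fin n)} (h : U ⊆ S) :
    propsOf n Ps U ⊆ propsOf n Ps S := by
  rintro p ⟨hp, x, hx1, hx2⟩
  exact ⟨hp, x, hx1, h hx2⟩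

lemma propsOf_union (A B : Set (Fin n)) :
    propsOf n Ps (A ∪ B) = propsOf n Ps A ∪ propsOf n Ps B := by
  ext p
  constructor
  · rintro ⟨hp, x, hx1, hx2 | hx2⟩
    · exact Or.inl ⟨hp, x, hx1, hx2⟩
    · exact Or.inr ⟨hp, x, hx1, hx2⟩
  · rintro (⟨hp, x, hx1, hx2⟩ | ⟨hp, x, hx1, hx2⟩)
    · exact ⟨hp, x, hx1, Or.inl hx2⟩
    · exact ⟨hp, x, hx1, Or.inr hx2⟩

lemma defi_supermod (A B : Set (Fin n)) :
    defi n Ps A + defi n Ps B ≤ defi n Ps (A ∪ B) + defi n Ps (A ∩ B) := by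
  have hv : (A ∪ B).ncard + (A ∩ B).ncard = A.ncard + B.ncard :=
    Set.ncard_union_add_ncard_inter A B (Set.toFinite A) (Set.toFinite B)
  have hPu : propsOf n Ps (A ∪ B) = propsOf n Ps A ∪ propsOf n Ps B := propsOf_union A B
  have hPi : propsOf n Ps (A ∩ B) ⊆ propsOf n Ps A ∩ propsOf n Ps B :=
    subset_inter (propsOf_mono inter_subset_left) (propsOf_mono inter_subset_right)
  have hPcard : (propsOf n Ps (A ∪ B)).ncard + (propsOf n Ps (A ∩ B)).ncard ≤
      (propsOf n Ps A).ncard + (propsOf n Ps B).ncard := by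
    rw [hPu]
    have h1 : (propsOf n Ps (A ∩ B)).ncard ≤ (propsOf n Ps A ∩ propsOf n Ps B).ncard :=
      Set.ncard_le_ncard hPi (Set.toFinite _)
    have h2 : (propsOf n Ps A ∪ propsOf n Ps B).ncard +
        (propsOf n Ps A ∩ propsOf n Ps B).ncard =
        (propsOf n Ps A).ncard + (propsOf n Ps B).ncard :=
      Set.ncard_union_add_ncard_inter _ _ (Set.toFinite _) (Set.toFinite _)
    omega
  simp only [defi]
  omega

end Aux

/-- In the matroid `M(W)` of a well-defined Wilson loop diagram, any
cyclic set `C` (a union of circuits) satisfies `rk C = |Prop(C)|`. -/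
theorem cyclic_set_rank_eq_card_props (n : ℕ) [NeZero n]
    (Ps : Set (Fin n × Fin n)) (hW : WellDefinedWLD n Ps)
    (M : Matroid (Fin n)) (hME : M.E = Set.univ)
    (hMI : ∀ S : Set (Fin n), M.Indep S ↔ ∀ U ⊆ S, U.ncard ≤ (propsOf n Ps U).ncard)
    (C : Set (Fin n)) (hC : M.UnionOfCircuits C) :
    M.rk' C = (propsOf n Ps C).ncard := by
  classical
  obtain ⟨𝒞, h𝒞, hCeq⟩ := hC
  -- Proper subsets of circuits are independent, so have nonpositive deficiency.
  have circ_sub : ∀ D ∈ 𝒞, ∀ U ⊂ D, defi n Ps U ≤ 0 := by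
    intro D hD U hU
    have hnd : ¬ M.Dep U := (h𝒞 D hD).2 U hU
    have hind : M.Indep U := by
      by_contra h
      exact hnd ⟨h, by rw [hME]; exact subset_univ U⟩
    have := (hMI U).mp hind U subset_rfl
    simp only [defi]
    omega
  -- Circuits have deficiency at least 1.
  have circ_defi : ∀ D ∈ 𝒞, 1 ≤ defi n Ps D := by
    intro D hD
    have hdep : ¬ M.Indep D := (h𝒞 D hD).1.1
    rw [hMI] at hdep
    push_neg at hdep
    obtain ⟨U, hUD, hlt⟩ := hdep
    rcases hUD.ssubset_or_eq with hss | rfl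
    · have := circ_sub D hD U hss
      simp only [defi] at this
      omega
    · simp only [defi]
      omega
  -- Claim A: the deficiency over subsets of `C` is maximized at `C`.
  have claimA : ∀ (k : ℕ) (U : Set (Fin n)), U ⊆ C → (C \ U).ncard ≤ k →
      defi n Ps U ≤ defi n Ps C := by
    intro k
    induction k with
    | zero =>
      intro U hU h0
      have he : C \ U = ∅ := by
        rw [← Set.ncard_eq_zero (Set.toFinite (C \ U))]
        omega
      rw [subset_antisymm hU (Set.diff_eq_empty.mp he)]
    | succ k ih =>
      intro U hU hk
      by_cases hUC : C ⊆ U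
      · rw [subset_antisymm hU hUC]
      · obtain ⟨x, hxC, hxU⟩ := not_subset.mp hUC
        obtain ⟨D, hD𝒞, hxD⟩ : ∃ D ∈ 𝒞, x ∈ D := by
          rw [hCeq] at hxC
          exact hxC
        have hDC : D ⊆ C := hCeq ▸ subset_sUnion_of_mem hD𝒞
        have h1 : defi n Ps (U ∩ D) ≤ 0 :=
          circ_sub D hD𝒞 (U ∩ D) ⟨inter_subset_right, fun h => hxU (h hxD).1⟩
        have h2 := defi_supermod (Ps := Ps) U D
        have h3 := circ_defi D hD𝒞
        have h4 : defi n Ps (U ∪ D) ≤ defi n Ps C := by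
          apply ih (U ∪ D) (union_subset hU hDC)
          have hss : C \ (U ∪ D) ⊂ C \ U :=
            ⟨diff_subset_diff_right subset_union_left,
             fun h => (h ⟨hxC, hxU⟩).2 (Or.inr hxD)⟩
          have := Set.ncard_lt_ncard hss (Set.toFinite _)
          omega
        omega
  have claimA' : ∀ U ⊆ C, defi n Ps U ≤ defi n Ps C := fun U hU =>
    claimA (C \ U).ncard U hU le_rfl
  -- Hall condition on the propagator side.
  have hall : ∀ Q : Set (Fin n × Fin n), Q ⊆ propsOf n Ps C →
      Q.ncard ≤ ((⋃ p ∈ Q, Vp n p) ∩ C).ncard := by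
    intro Q hQ
    set T := (⋃ p ∈ Q, Vp n p) ∩ C with hT
    have hTC : T ⊆ C := inter_subset_right
    have hU := claimA' (C \ T) diff_subset
    have hcardU : (C \ T).ncard = C.ncard - T.ncard :=
      Set.ncard_diff hTC
    have hTle : T.ncard ≤ C.ncard := Set.ncard_le_ncard hTC (Set.toFinite C)
    have hdisj : Disjoint (propsOf n Ps (C \ T)) Q := by
      rw [Set.disjoint_left]
      rintro p ⟨hp, x, hx1, hx2⟩ hpQ
      exact hx2.2 ⟨Set.mem_biUnion hpQ hx1, hx2.1⟩
    have hsub : propsOf n Ps (C \ T) ∪ Q ⊆ propsOf n Ps C :=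
      union_subset (propsOf_mono diff_subset) hQ
    have hcard : (propsOf n Ps (C \ T)).ncard + Q.ncard ≤ (propsOf n Ps C).ncard := by
      rw [← Set.ncard_union_eq hdisj (Set.toFinite _) (Set.toFinite _)]
      exact Set.ncard_le_ncard hsub (Set.toFinite _)
    simp only [defi] at hU
    omega
  -- Apply Hall's marriage theorem.
  set ι := {p : Fin n × Fin n // p ∈ propsOf n Ps C} with hι
  set t : ι → Finset (Fin n) := fun p => (Set.toFinite (Vp n p.1 ∩ C)).toFinset with ht
  have hallF : ∀ s : Finset ι, s.card ≤ (s.biUnion t).card := by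
    intro s
    have hQ : (Subtype.val '' (↑s : Set ι)) ⊆ propsOf n Ps C := by
      rintro p ⟨q, _, rfl⟩; exact q.2
    have h1 := hall _ hQ
    have hs : (Subtype.val '' (↑s : Set ι)).ncard = s.card := by
      rw [Set.ncard_image_of_injective _ Subtype.val_injective, Set.ncard_coe_finset]
    have hteq : ((⋃ p ∈ Subtype.val '' (↑s : Set ι), Vp n p) ∩ C) = ↑(s.biUnion t) := by
      ext x
      simp only [Set.mem_inter_iff, Set.mem_iUnion, Finset.coe_biUnion, Set.mem_image,
        Finset.mem_coe, ht, Set.Finite.coe_toFinset, exists_prop]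
      constructor
      · rintro ⟨⟨p, ⟨q, hq, rfl⟩, hx⟩, hxC⟩
        exact ⟨q, hq, hx, hxC⟩
      · rintro ⟨q, hq, hx, hxC⟩
        exact ⟨⟨q.1, ⟨q, hq, rfl⟩, hx⟩, hxC⟩
    rw [hs, hteq, Set.ncard_coe_finset] at h1
    exact h1
  obtain ⟨f, hfinj, hft⟩ := (Finset.all_card_le_biUnion_card_iff_exists_injective t).mp hallF
  have hft' : ∀ p : ι, f p ∈ Vp n p.1 ∩ C := by
    intro p
    have := hft p
    rwa [ht, Set.Finite.mem_toFinset] at this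
  set I₀ : Set (Fin n) := Set.range f with hI₀
  have hI₀C : I₀ ⊆ C := by
    rintro _ ⟨p, rfl⟩
    exact (hft' p).2
  have hI₀card : I₀.ncard = (propsOf n Ps C).ncard := by
    rw [hI₀, ← Set.image_univ, Set.ncard_image_of_injective _ hfinj, Set.ncard_univ,
      Nat.card_coe_set_eq]
  have hI₀indep : M.Indep I₀ := by
    rw [hMI]
    intro U hUI
    have hUr : U ⊆ Set.range f := hUI
    have hUeq : f '' (f ⁻¹' U) = U := Set.image_preimage_eq_of_subset hUr
    have h1 : U.ncard = (f ⁻¹' U).ncard := by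
      have := Set.ncard_image_of_injective (f ⁻¹' U) hfinj
      rw [hUeq] at this
      exact this
    have h2 : (Subtype.val '' (f ⁻¹' U)) ⊆ propsOf n Ps U := by
      rintro _ ⟨p, hpF, rfl⟩
      exact ⟨p.2.1, f p, (hft' p).1, hpF⟩
    have h3 : (f ⁻¹' U).ncard ≤ (propsOf n Ps U).ncard := by
      rw [← Set.ncard_image_of_injective _ (Subtype.val_injective (p := fun q => q ∈ propsOf n Ps C))]
      exact Set.ncard_le_ncard h2 (Set.toFinite _)
    omega
  -- Conclude.
  have hbound : ∀ a ∈ Set.ncard '' {I | M.Indep I ∧ I ⊆ C}, a ≤ (propsOf n Ps C).ncard := by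
    rintro a ⟨I, ⟨hI, hIC⟩, rfl⟩
    calc I.ncard ≤ (propsOf n Ps I).ncard := (hMI I).mp hI I subset_rfl
      _ ≤ (propsOf n Ps C).ncard := Set.ncard_le_ncard (propsOf_mono hIC) (Set.toFinite _)
  have hmem : (propsOf n Ps C).ncard ∈ Set.ncard '' {I | M.Indep I ∧ I ⊆ C} :=
    ⟨I₀, ⟨hI₀indep, hI₀C⟩, hI₀card⟩
  refine le_antisymm (csSup_le ⟨_, hmem⟩ hbound) (le_csSup ⟨_, hbound⟩ hmem)
end

section
/- Let W = (𝒫, n) be a well-defined Wilson loop diagram with 𝒫 nonempty and V_𝒫 = Fin n, and let M be its matroid M(W). Then M is not connected if and only if there exists a partition 𝒫 = P₁ ⊔ P₂ into two nonempty sets such that V_{P₁} ∩ V_{P₂} = ∅ (equivalently, such that F(P₁) and F(P₂) partition Fin n). -/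
open Matroid Set

/-!
Independence in `M(W)` is Hall's condition for matching vertices to distinct propagators whose
supports contain them. If `P₁` and `P₂` have disjoint supports, Hall's condition splits along
the two supports, so no circuit meets both. Conversely, well-definedness leaves enough room in
Hall's theorem to match `Ps` avoiding one vertex `a` of a propagator `p` while matching `p`
itself to another vertex `b` of it; adding `a` gives a dependent set each of whose circuits
contains both `a` and `b`. Hence the vertices of a single propagator lie on a common circuit,
and since this relation is transitive, the circuit-component of a vertex is a union of
propagator supports.
-/

open Function

namespace Matroid

variable {α : Type*} {M : Matroid α} {C C₁ C₂ : Set α} {e x y z : α}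

lemma isCircuitOf_iff_isCircuit : M.IsCircuitOf C ↔ M.IsCircuit C := by
  rw [IsCircuitOf, isCircuit_iff_forall_ssubset]
  exact and_congr_right fun hC ↦ forall₂_congr fun D hD ↦
    not_dep_iff (hD.subset.trans hC.subset_ground)

lemma IsCircuit.exists_isCircuit_mem_inter_sdiff (h₁ : M.IsCircuit C₁) (h₂ : M.IsCircuit C₂)
    (he₁ : e ∈ C₁) (he₂ : e ∈ C₂) (hx₁ : x ∈ C₁) (hx₂ : x ∉ C₂) :
    ∃ C ⊆ (C₁ ∪ C₂) \ {e}, M.IsCircuit C ∧ x ∈ C ∧ (C ∩ (C₂ \ C₁)).Nonempty := by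
  obtain ⟨C, hCsub, hC, hxC⟩ := h₁.strong_elimination h₂ he₁ he₂ hx₁ hx₂
  have hCC₁ : ¬ C ⊆ C₁ := fun h ↦ (hCsub (hC.eq_of_subset_isCircuit h₁ h ▸ he₁)).2 rfl
  obtain ⟨g, hgC, hgC₁⟩ := not_subset.1 hCC₁
  exact ⟨C, hCsub, hC, hxC, g, hgC, ((hCsub hgC).1.resolve_left hgC₁), hgC₁⟩

/-- Oxley, *Matroid Theory*, Proposition 4.1.2. -/
lemma IsCircuit.exists_isCircuit_of_inter_nonempty [M.Finitary] (h₁ : M.IsCircuit C₁)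
    (h₂ : M.IsCircuit C₂) (hx : x ∈ C₁) (hy : y ∈ C₂) (h₁₂ : (C₁ ∩ C₂).Nonempty) :
    ∃ C, M.IsCircuit C ∧ x ∈ C ∧ y ∈ C := by
  induction hk : (C₁ ∪ C₂).ncard using Nat.strong_induction_on generalizing C₁ C₂ with
  | _ k ih =>
  by_cases hxC₂ : x ∈ C₂
  · exact ⟨C₂, h₂, hxC₂, hy⟩
  by_cases hyC₁ : y ∈ C₁
  · exact ⟨C₁, h₁, hx, hyC₁⟩
  obtain ⟨e, he₁, he₂⟩ := h₁₂
  have hlt : ∀ D ⊂ C₁ ∪ C₂, D.ncard < k :=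
    fun D hD ↦ hk ▸ ncard_lt_ncard hD (h₁.finite.union h₂.finite)
  obtain ⟨C₃, hC₃, h₃, hx₃, g, hg₃, hg₂, hg₁⟩ :=
    h₁.exists_isCircuit_mem_inter_sdiff h₂ he₁ he₂ hx hxC₂
  obtain ⟨C₄, hC₄, h₄, hy₄, g', hg'₄, hg'₁, -⟩ :=
    h₂.exists_isCircuit_mem_inter_sdiff h₁ he₂ he₁ hy hyC₁
  rw [union_comm C₂] at hC₄
  -- By minimality of `k`, `C₃ ∪ C₂` and `C₁ ∪ C₄` are all of `C₁ ∪ C₂`,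
  -- so `g ∈ C₂ \ C₁` lies in `C₄`, while `C₃ ∪ C₄` misses `e`.
  by_cases h₃₂ : C₃ ∪ C₂ = C₁ ∪ C₂
  swap
  · have hss := (union_subset_union_left C₂ (hC₃.trans sdiff_subset)).trans
      (union_subset (subset_refl _) subset_union_right) |>.ssubset_of_ne h₃₂
    exact ih _ (hlt _ hss) h₃ h₂ hx₃ hy ⟨g, hg₃, hg₂⟩ rfl
  by_cases h₁₄ : C₁ ∪ C₄ = C₁ ∪ C₂
  swap
  · have hss := (union_subset subset_union_left (hC₄.trans sdiff_subset)).ssubset_of_ne h₁₄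
    exact ih _ (hlt _ hss) h₁ h₄ hx hy₄ ⟨g', hg'₁, hg'₄⟩ rfl
  have hg₄ : g ∈ C₄ := (h₁₄ ▸ Or.inr hg₂ : g ∈ C₁ ∪ C₄).resolve_left hg₁
  have hss : C₃ ∪ C₄ ⊂ C₁ ∪ C₂ := by
    refine ssubset_of_subset_of_ne (union_subset (hC₃.trans sdiff_subset)
      (hC₄.trans sdiff_subset)) fun h ↦ ?_
    obtain h₃ | h₄ : e ∈ C₃ ∪ C₄ := h ▸ Or.inl he₁
    exacts [(hC₃ h₃).2 rfl, (hC₄ h₄).2 rfl]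
  exact ih _ (hlt _ hss) h₃ h₄ hx₃ hy₄ ⟨g, hg₃, hg₄⟩ rfl

def CircuitConnected (M : Matroid α) (x y : α) : Prop :=
  x = y ∨ ∃ C, M.IsCircuit C ∧ x ∈ C ∧ y ∈ C

lemma CircuitConnected.trans [M.Finitary] (hxy : M.CircuitConnected x y)
    (hyz : M.CircuitConnected y z) : M.CircuitConnected x z := by
  obtain rfl | ⟨C₁, h₁, hx, hy⟩ := hxy
  · exact hyz
  obtain rfl | ⟨C₂, h₂, hy', hz⟩ := hyz
  · exact Or.inr ⟨C₁, h₁, hx, hy⟩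
  exact Or.inr (h₁.exists_isCircuit_of_inter_nonempty h₂ hx hz ⟨y, hy, hy'⟩)

lemma conn_iff_forall_circuitConnected :
    M.Conn ↔ M.E.Nonempty ∧ ∀ x ∈ M.E, ∀ y ∈ M.E, M.CircuitConnected x y := by
  simp only [Conn, CircuitConnected, isCircuitOf_iff_isCircuit]

end Matroid

section WilsonLoop

variable {n : ℕ} [NeZero n] {Ps P P₁ P₂ : Set (Fin n × Fin n)} {S T X : Set (Fin n)}
  {p : Fin n × Fin n} {v : Fin n}

lemma fst_mem_Vp (p : Fin n × Fin n) : p.1 ∈ Vp n p := Or.inl rfl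

lemma mem_VP : v ∈ VP n P ↔ ∃ p ∈ P, v ∈ Vp n p := by
  simp [VP]

lemma Vp_subset_VP (hp : p ∈ P) : Vp n p ⊆ VP n P :=
  subset_biUnion_of_mem (u := Vp n) hp

lemma propsOf_subset : propsOf n Ps S ⊆ Ps := fun _ hp ↦ hp.1

lemma propsOf_nonempty (hcover : VP n Ps = univ) (hv : v ∈ S) : (propsOf n Ps S).Nonempty := by
  obtain ⟨p, hp, hvp⟩ := mem_VP.1 (hcover ▸ mem_univ v)
  exact ⟨p, hp, v, hvp, hv⟩

lemma propsOf_union_propsOf_compl (X : Set (Fin n)) : propsOf n Ps X ∪ propsOf n Ps Xᶜ = Ps := by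
  refine (union_subset propsOf_subset propsOf_subset).antisymm fun p hp ↦ ?_
  by_cases h : p.1 ∈ X
  exacts [Or.inl ⟨hp, p.1, fst_mem_Vp p, h⟩, Or.inr ⟨hp, p.1, fst_mem_Vp p, h⟩]

lemma VP_propsOf_subset (h : Disjoint (propsOf n Ps X) (propsOf n Ps Xᶜ)) :
    VP n (propsOf n Ps X) ⊆ X := by
  intro v hv
  obtain ⟨p, hpX, hvp⟩ := mem_VP.1 hv
  by_contra hvX
  exact disjoint_left.1 h hpX ⟨hpX.1, v, hvp, hvX⟩

lemma disjoint_propsOf_of_disjoint_VP (hP : Ps ⊆ P₁ ∪ P₂) (hV : Disjoint (VP n P₁) (VP n P₂))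
    (hS : S ⊆ VP n P₁) (hT : Disjoint T (VP n P₁)) :
    Disjoint (propsOf n Ps S) (propsOf n Ps T) := by
  refine disjoint_left.2 fun p ⟨hp, s, hsp, hs⟩ ⟨_, t, htp, ht⟩ ↦ ?_
  rcases hP hp with hp₁ | hp₂
  · exact disjoint_left.1 hT ht (Vp_subset_VP hp₁ htp)
  · exact disjoint_left.1 hV (hS hs) (Vp_subset_VP hp₂ hsp)

lemma propsOf_union_s13 : propsOf n Ps (S ∪ T) = propsOf n Ps S ∪ propsOf n Ps T := by
  ext p
  simp only [propsOf, inter_union_distrib_left, union_nonempty, mem_ofPred_eq, mem_union,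
    and_or_left]

lemma ncard_propsOf_union (hST : Disjoint (propsOf n Ps S) (propsOf n Ps T)) :
    (propsOf n Ps (S ∪ T)).ncard = (propsOf n Ps S).ncard + (propsOf n Ps T).ncard := by
  rw [propsOf_union_s13, ncard_union_eq hST]

open Classical in
lemma card_le_card_filter_mem_Vp (hW : WellDefinedWLD n Ps) (p' : Ps) {a b : Fin n} (hab : a ≠ b)
    (hb : b ∈ Vp n p') (A : Finset Ps) :
    A.card ≤ (Finset.univ.filter fun v ↦ ∃ q ∈ A, v ∈ Vp n q ∧ v ≠ a ∧ (q = p' → v = b)).card := by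
  set N := Finset.univ.filter fun v ↦ ∃ q ∈ A, v ∈ Vp n q ∧ v ≠ a ∧ (q = p' → v = b)
  have hA : A.card ≤ (A.erase p').card + 1 := by
    have := Finset.pred_card_le_card_erase (s := A) (a := p'); omega
  rcases (A.erase p').eq_empty_or_nonempty with h0 | ⟨q₀, hq₀⟩
  · rcases A.eq_empty_or_nonempty with rfl | ⟨q, hq⟩
    · simp
    have hqp : q = p' := by
      by_contra hne
      simpa [h0] using Finset.mem_erase.2 ⟨hne, hq⟩
    have hbN : b ∈ N :=
      Finset.mem_filter.2 ⟨Finset.mem_univ _, q, hq, hqp ▸ hb, hab.symm, fun _ ↦ rfl⟩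
    rw [h0, Finset.card_empty] at hA
    have := Finset.card_pos.2 ⟨b, hbN⟩
    omega
  -- Well-definedness leaves room to drop the vertex `a`.
  set P₀ : Set (Fin n × Fin n) := Subtype.val '' (A.erase p' : Set Ps)
  have hP₀ : P₀.ncard = (A.erase p').card := by
    rw [ncard_image_of_injective _ Subtype.val_injective, ncard_coe_finset]
  have hW₀ := hW P₀ (by rintro _ ⟨q, -, rfl⟩; exact q.2) ⟨q₀, q₀, hq₀, rfl⟩
  have hsub : VP n P₀ \ {a} ⊆ ↑N := by
    rintro v ⟨hv, hva⟩
    obtain ⟨_, ⟨q, hq, rfl⟩, hvq⟩ := mem_VP.1 hv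
    obtain ⟨hqp, hqA⟩ := Finset.mem_erase.1 hq
    simp only [N, Finset.coe_filter, Finset.mem_univ, true_and, mem_ofPred_eq]
    exact ⟨q, hqA, hvq, hva, fun h ↦ absurd h hqp⟩
  have := ncard_le_ncard hsub (toFinite _)
  have := pred_ncard_le_ncard_sdiff_singleton (VP n P₀) a
  rw [ncard_coe_finset] at *
  omega

lemma exists_injective_mem_Vp_eq_notMem_range (hW : WellDefinedWLD n Ps) (p' : Ps)
    {a b : Fin n} (hab : a ≠ b) (hb : b ∈ Vp n p') :
    ∃ Φ : Ps → Fin n, Injective Φ ∧ (∀ q : Ps, Φ q ∈ Vp n q) ∧ Φ p' = b ∧ a ∉ range Φ := by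
  classical
  obtain ⟨Φ, hΦ, hr⟩ := (Fintype.all_card_le_filter_rel_iff_exists_injective
    fun (q : Ps) v ↦ v ∈ Vp n q ∧ v ≠ a ∧ (q = p' → v = b)).1
    (card_le_card_filter_mem_Vp hW p' hab hb)
  exact ⟨Φ, hΦ, fun q ↦ (hr q).1, (hr p').2.2 rfl, fun ⟨q, hq⟩ ↦ (hr q).2.1 hq⟩

end WilsonLoop

section WilsonLoopMatroid

variable {n : ℕ} [NeZero n] {Ps P₁ P₂ : Set (Fin n × Fin n)} {S : Set (Fin n)}
  {p : Fin n × Fin n} {M : Matroid (Fin n)} {a b x y : Fin n}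

lemma dep_of_ncard_propsOf_lt (hME : M.E = univ)
    (hMI : ∀ S : Set (Fin n), M.Indep S ↔ ∀ U ⊆ S, U.ncard ≤ (propsOf n Ps U).ncard)
    (h : (propsOf n Ps S).ncard < S.ncard) : M.Dep S :=
  ⟨fun hS ↦ ((hMI S).1 hS S subset_rfl).not_gt h, hME ▸ subset_univ S⟩

lemma indep_range_of_injective
    (hMI : ∀ S : Set (Fin n), M.Indep S ↔ ∀ U ⊆ S, U.ncard ≤ (propsOf n Ps U).ncard)
    {Φ : Ps → Fin n} (hΦ : Injective Φ) (hΦV : ∀ q : Ps, Φ q ∈ Vp n q) : M.Indep (range Φ) := by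
  refine (hMI _).2 fun U hU ↦ ?_
  calc U.ncard = (Φ ⁻¹' U).ncard := (ncard_preimage_of_injective_subset_range hΦ hU).symm
    _ = (Subtype.val '' (Φ ⁻¹' U)).ncard :=
      (ncard_image_of_injective _ Subtype.val_injective).symm
    _ ≤ (propsOf n Ps U).ncard := by
      refine ncard_le_ncard ?_ (toFinite _)
      rintro _ ⟨q, hq, rfl⟩
      exact ⟨q.2, Φ q, hΦV q, hq⟩

lemma indep_of_indep_inter_of_indep_sdiff
    (hMI : ∀ S : Set (Fin n), M.Indep S ↔ ∀ U ⊆ S, U.ncard ≤ (propsOf n Ps U).ncard)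
    (hP : Ps ⊆ P₁ ∪ P₂) (hV : Disjoint (VP n P₁) (VP n P₂))
    (h₁ : M.Indep (S ∩ VP n P₁)) (h₂ : M.Indep (S \ VP n P₁)) : M.Indep S := by
  refine (hMI S).2 fun U hU ↦ ?_
  have hsplit := disjoint_propsOf_of_disjoint_VP (S := U ∩ VP n P₁) (T := U \ VP n P₁) hP hV
    inter_subset_right disjoint_sdiff_left
  have hU₁ := (hMI _).1 h₁ (U ∩ VP n P₁) (inter_subset_inter_left _ hU)
  have hU₂ := (hMI _).1 h₂ (U \ VP n P₁) (sdiff_subset_sdiff_left hU)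
  calc U.ncard = (U ∩ VP n P₁).ncard + (U \ VP n P₁).ncard :=
        (ncard_inter_add_ncard_sdiff_eq_ncard U _).symm
    _ ≤ (propsOf n Ps (U ∩ VP n P₁)).ncard + (propsOf n Ps (U \ VP n P₁)).ncard := by omega
    _ = (propsOf n Ps U).ncard := by rw [← ncard_propsOf_union hsplit, inter_union_sdiff]

lemma not_circuitConnected_of_disjoint_VP
    (hMI : ∀ S : Set (Fin n), M.Indep S ↔ ∀ U ⊆ S, U.ncard ≤ (propsOf n Ps U).ncard)
    (hP : Ps ⊆ P₁ ∪ P₂) (hV : Disjoint (VP n P₁) (VP n P₂))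
    (hx : x ∈ VP n P₁) (hy : y ∈ VP n P₂) : ¬ M.CircuitConnected x y := by
  rintro (rfl | ⟨C, hC, hxC, hyC⟩)
  · exact disjoint_left.1 hV hx hy
  have hyC₁ : y ∉ C ∩ VP n P₁ := fun h ↦ disjoint_left.1 hV h.2 hy
  have hxC₂ : x ∉ C \ VP n P₁ := fun h ↦ h.2 hx
  exact hC.not_indep <| indep_of_indep_inter_of_indep_sdiff hMI hP hV
    (hC.ssubset_indep (inter_subset_left.ssubset_of_ne fun h ↦ hyC₁ (h.symm ▸ hyC)))
    (hC.ssubset_indep (sdiff_subset.ssubset_of_ne fun h ↦ hxC₂ (h.symm ▸ hxC)))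

lemma circuitConnected_of_mem_Vp (hW : WellDefinedWLD n Ps) (hME : M.E = univ)
    (hMI : ∀ S : Set (Fin n), M.Indep S ↔ ∀ U ⊆ S, U.ncard ≤ (propsOf n Ps U).ncard)
    (hp : p ∈ Ps) (ha : a ∈ Vp n p) (hb : b ∈ Vp n p) : M.CircuitConnected a b := by
  obtain rfl | hab := eq_or_ne a b
  · exact Or.inl rfl
  set p' : Ps := ⟨p, hp⟩
  obtain ⟨Φ, hΦ, hΦV, hΦp, haΦ⟩ := exists_injective_mem_Vp_eq_notMem_range hW p' hab hb
  -- `insert a (range Φ)` has `|Ps| + 1` elements, so it contains a circuit `C`;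
  -- `C` contains `a` and `b`, since `range Φ` and `range Φ'` are independent.
  have hdep : M.Dep (insert a (range Φ)) := dep_of_ncard_propsOf_lt hME hMI <| by
    calc (propsOf n Ps _).ncard ≤ Ps.ncard := ncard_le_ncard propsOf_subset (toFinite _)
      _ < (insert a (range Φ)).ncard := by
        rw [ncard_insert_of_notMem haΦ, ncard_range_of_injective hΦ, Nat.card_coe_set_eq]
        omega
  obtain ⟨C, hCB, hC⟩ := hdep.exists_isCircuit_subset
  classical
  set Φ' := update Φ p' a
  have hΦ' : Injective Φ' := by
    intro q r hqr
    rcases eq_or_ne q p' with rfl | hq <;> rcases eq_or_ne r p' with rfl | hr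
    · rfl
    · exact absurd ⟨r, by simpa [Φ', hr] using hqr.symm⟩ haΦ
    · exact absurd ⟨q, by simpa [Φ', hq] using hqr⟩ haΦ
    · simpa [Φ', hq, hr, hΦ.eq_iff] using hqr
  have hΦ'V : ∀ q : Ps, Φ' q ∈ Vp n q := by
    intro q
    rcases eq_or_ne q p' with rfl | hq
    · simpa [Φ'] using ha
    · simpa [Φ', hq] using hΦV q
  refine Or.inr ⟨C, hC, by_contra fun haC ↦ hC.not_indep ?_, by_contra fun hbC ↦ hC.not_indep ?_⟩
  · refine (indep_range_of_injective hMI hΦ hΦV).subset fun v hv ↦ ?_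
    exact (hCB hv).resolve_left (ne_of_mem_of_not_mem hv haC)
  · refine (indep_range_of_injective hMI hΦ' hΦ'V).subset fun v hv ↦ ?_
    rcases hCB hv with rfl | ⟨q, rfl⟩
    · exact ⟨p', update_self ..⟩
    · have hq : q ≠ p' := by rintro rfl; exact hbC (hΦp ▸ hv)
      exact ⟨q, update_of_ne hq ..⟩

end WilsonLoopMatroid

theorem disconnected_iff_propagator_partition_general (n : ℕ) [NeZero n]
    (Ps : Set (Fin n × Fin n)) (hW : WellDefinedWLD n Ps)
    (hcover : VP n Ps = Set.univ)
    (M : Matroid (Fin n)) (hME : M.E = Set.univ)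
    (hMI : ∀ S : Set (Fin n), M.Indep S ↔ ∀ U ⊆ S, U.ncard ≤ (propsOf n Ps U).ncard) :
    ¬ M.Conn ↔ ∃ P₁ P₂ : Set (Fin n × Fin n), P₁.Nonempty ∧ P₂.Nonempty ∧
      Disjoint P₁ P₂ ∧ P₁ ∪ P₂ = Ps ∧ VP n P₁ ∩ VP n P₂ = ∅ := by
  rw [conn_iff_forall_circuitConnected, hME]
  constructor
  · intro hnc
    obtain ⟨x, y, hxy⟩ : ∃ x y, ¬ M.CircuitConnected x y := by
      by_contra! h
      exact hnc ⟨univ_nonempty, fun x _ y _ ↦ h x y⟩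
    set X := {v | M.CircuitConnected x v}
    have hsplit : Disjoint (propsOf n Ps X) (propsOf n Ps Xᶜ) :=
      disjoint_left.2 fun p ⟨hp, a, hap, ha⟩ ⟨_, b, hbp, hb⟩ ↦
        hb (CircuitConnected.trans ha (circuitConnected_of_mem_Vp hW hME hMI hp hap hbp))
    have hsplit' : Disjoint (propsOf n Ps Xᶜ) (propsOf n Ps Xᶜᶜ) := by
      rw [compl_compl]; exact hsplit.symm
    refine ⟨_, _, propsOf_nonempty hcover (Or.inl rfl : x ∈ X), propsOf_nonempty hcover hxy,
      hsplit, propsOf_union_propsOf_compl X, ?_⟩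
    exact disjoint_iff_inter_eq_empty.1 <|
      disjoint_compl_right.mono (VP_propsOf_subset hsplit) (VP_propsOf_subset hsplit')
  · rintro ⟨P₁, P₂, ⟨p₁, hp₁⟩, ⟨p₂, hp₂⟩, -, hP, hV⟩ ⟨-, hconn⟩
    exact not_circuitConnected_of_disjoint_VP hMI hP.ge (disjoint_iff_inter_eq_empty.2 hV)
      (Vp_subset_VP hp₁ (fst_mem_Vp p₁)) (Vp_subset_VP hp₂ (fst_mem_Vp p₂))
      (hconn _ (mem_univ _) _ (mem_univ _))

/-- For a well-defined Wilson loop diagram with `Ps` nonempty and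
`V_Ps = Fin n`, the matroid `M(W)` is disconnected iff the propagators can be partitioned
into two nonempty sets with disjoint supports (equivalently, whose propagator flats
partition `Fin n`). -/
theorem disconnected_iff_propagator_partition (n : ℕ) [NeZero n]
    (Ps : Set (Fin n × Fin n)) (hW : WellDefinedWLD n Ps) (hPs : Ps.Nonempty)
    (hcover : VP n Ps = Set.univ)
    (M : Matroid (Fin n)) (hME : M.E = Set.univ)
    (hMI : ∀ S : Set (Fin n), M.Indep S ↔ ∀ U ⊆ S, U.ncard ≤ (propsOf n Ps U).ncard) :
    ¬ M.Conn ↔ ∃ P₁ P₂ : Set (Fin n × Fin n), P₁.Nonempty ∧ P₂.Nonempty ∧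
      Disjoint P₁ P₂ ∧ P₁ ∪ P₂ = Ps ∧ VP n P₁ ∩ VP n P₂ = ∅ :=
  disconnected_iff_propagator_partition_general n Ps hW hcover M hME hMI
end

section
/- Let W = (𝒫, n) be a well-defined Wilson loop diagram with V_𝒫 = Fin n, and let M be its matroid M(W). If F ⊆ Fin n is a nonempty cyclic flat of M (a flat that is a union of circuits of M), then there exists P ⊆ 𝒫 with F = F(P) and |F| > |P|; indeed one may take P = Prop(F). -/
/-!
`M(W)` is the transversal matroid of the incidence relation between vertices and propagators,
`Prop(S)` being the neighbourhood of `S`. Let `I` be a basis of a cyclic set `F`. Since `I` satisfies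
Hall's condition, the subsets `A ⊆ I` with `|Prop(A)| ≤ |A|` are closed under union, so there is a
largest one, `T`. A deficient subset of `I ∪ {y}`, for `y ∈ F \ I`, shows `Prop({y}) ⊆ Prop(T)`, so
`T` spans `F \ I`; as `F` has no coloops, `T = I`. Hence `Prop(F) = Prop(I)` has `|I| < |F|`
elements and the rank of `F` is `|Prop(F)|`, so a flat `F` contains every vertex `x` with
`Prop({x}) ⊆ Prop(F)`. When every vertex lies on a propagator, this says `F = F(Prop(F))`.
-/

open Matroid Set

namespace SetRel

variable {α β : Type*} [Finite α] [Finite β] {R : SetRel α β} {I A B : Set α} {y : α}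

lemma ncard_image_union_le (hI : ∀ U ⊆ I, U.ncard ≤ (R.image U).ncard)
    (hAI : A ⊆ I) (hA : (R.image A).ncard ≤ A.ncard)
    (hB : (R.image B).ncard ≤ B.ncard) : (R.image (A ∪ B)).ncard ≤ (A ∪ B).ncard := by
  have hRAB := ncard_union_add_ncard_inter (R.image A) (R.image B) (toFinite _) (toFinite _)
  have hAB := ncard_union_add_ncard_inter A B (toFinite _) (toFinite _)
  have hinter : (A ∩ B).ncard ≤ (R.image A ∩ R.image B).ncard :=
    (hI _ (inter_subset_left.trans hAI)).trans
      (ncard_le_ncard (R.image_inter_subset) (toFinite _))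
  rw [R.image_union]
  omega

lemma exists_greatest_ncard_image_le (hI : ∀ U ⊆ I, U.ncard ≤ (R.image U).ncard) :
    ∃ T ⊆ I, (R.image T).ncard ≤ T.ncard ∧
      ∀ A ⊆ I, (R.image A).ncard ≤ A.ncard → A ⊆ T := by
  set 𝒯 : Set (Set α) := {A | A ⊆ I ∧ (R.image A).ncard ≤ A.ncard}
  have hsup : SupClosed 𝒯 := fun A hA B hB =>
    ⟨union_subset hA.1 hB.1, ncard_image_union_le hI hA.1 hA.2 hB.2⟩
  have hbot : (⊥ : Set α) ∈ 𝒯 := ⟨empty_subset I, by simp⟩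
  obtain ⟨hTI, hT⟩ := hsup.sSup_mem (toFinite 𝒯) hbot subset_rfl
  exact ⟨_, hTI, hT, fun A hAI hA => le_sSup (show A ∈ 𝒯 from ⟨hAI, hA⟩)⟩

lemma exists_ncard_image_le_image_singleton_subset
    (hI : ∀ U ⊆ I, U.ncard ≤ (R.image U).ncard)
    (hy : ∃ U ⊆ insert y I, (R.image U).ncard < U.ncard) :
    ∃ A ⊆ I, (R.image A).ncard ≤ A.ncard ∧ R.image {y} ⊆ R.image A := by
  obtain ⟨U, hUI, hU⟩ := hy
  have hyU : y ∈ U := by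
    by_contra hyU
    have := hI U ((subset_insert_iff_of_notMem hyU).1 hUI)
    omega
  have hAI : U \ {y} ⊆ I := sdiff_singleton_subset_iff.2 hUI
  have hA := hI _ hAI
  have hAU : R.image (U \ {y}) ⊆ R.image U := image_subset_image sdiff_subset
  have hcard := ncard_sdiff_singleton_add_one hyU
  have hRAU : R.image (U \ {y}) = R.image U :=
    eq_of_subset_of_ncard_le hAU (by omega) (toFinite _)
  exact ⟨U \ {y}, hAI, by rw [hRAU]; omega,
    hRAU ▸ image_subset_image (singleton_subset_iff.2 hyU)⟩

end SetRel

namespace Matroid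

variable {α : Type*} {M : Matroid α} {C F I T : Set α} {z : α}

lemma IsCircuitOf.isCircuit (hC : M.IsCircuitOf C) : M.IsCircuit C :=
  isCircuit_iff_forall_ssubset.2 ⟨hC.1, fun D hDC =>
    (not_dep_iff (hDC.subset.trans hC.1.subset_ground)).1 (hC.2 D hDC)⟩

lemma UnionOfCircuits.dep (hF : M.UnionOfCircuits F) (hne : F.Nonempty) : M.Dep F := by
  obtain ⟨𝒞, h𝒞, rfl⟩ := hF
  obtain ⟨z, C, hC, -⟩ := hne
  exact (h𝒞 C hC).1.superset (subset_sUnion_of_mem hC)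
    (sUnion_subset fun D hD => (h𝒞 D hD).1.subset_ground)

lemma UnionOfCircuits.mem_closure_sdiff_singleton (hF : M.UnionOfCircuits F) (hz : z ∈ F) :
    z ∈ M.closure (F \ {z}) := by
  obtain ⟨𝒞, h𝒞, rfl⟩ := hF
  obtain ⟨C, hC, hzC⟩ := hz
  exact M.closure_subset_closure (sdiff_subset_sdiff_left (subset_sUnion_of_mem hC))
    ((h𝒞 C hC).isCircuit.mem_closure_sdiff_singleton_of_mem hzC)

/-- Elements of `I \ T` would be coloops of `M ∣ F`. -/
lemma IsBasis.subset_of_sdiff_subset_closure (hI : M.IsBasis I F) (hF : M.UnionOfCircuits F)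
    (hTI : T ⊆ I) (hT : F \ I ⊆ M.closure T) : I ⊆ T := by
  intro z hzI
  by_contra hzT
  have hspan : F \ {z} ⊆ M.closure (I \ {z}) := by
    rintro x ⟨hxF, hxz⟩
    by_cases hxI : x ∈ I
    · exact M.subset_closure _ (sdiff_subset.trans hI.indep.subset_ground) ⟨hxI, hxz⟩
    · exact M.closure_subset_closure (subset_sdiff_singleton hTI hzT) (hT ⟨hxF, hxI⟩)
  exact hI.indep.notMem_closure_sdiff_of_mem hzI
    (M.closure_subset_closure_of_subset_closure hspan
      (hF.mem_closure_sdiff_singleton (hI.subset hzI)))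

variable {β : Type*} [Finite α] {R : SetRel α β} {A : Set α} {x : α}

lemma mem_closure_of_image_singleton_subset
    (hM : ∀ S, M.Indep S ↔ ∀ U ⊆ S, U.ncard ≤ (R.image U).ncard)
    (hA : M.Indep A) (hAR : (R.image A).ncard ≤ A.ncard) (hx : x ∈ M.E)
    (hxA : R.image {x} ⊆ R.image A) : x ∈ M.closure A := by
  refine hA.mem_closure_iff'.2 ⟨hx, fun hind => ?_⟩
  by_contra hxA'
  have hRxA : R.image (insert x A) = R.image A := by
    rw [insert_eq, R.image_union, union_eq_right.2 hxA]
  have := (hM _).1 hind (insert x A) subset_rfl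
  rw [hRxA, ncard_insert_of_notMem hxA' (toFinite A)] at this
  omega

variable [Finite β]

lemma image_subset_and_ncard_image_le_of_isBasis
    (hM : ∀ S, M.Indep S ↔ ∀ U ⊆ S, U.ncard ≤ (R.image U).ncard)
    (hF : M.UnionOfCircuits F) (hI : M.IsBasis I F) :
    R.image F ⊆ R.image I ∧ (R.image I).ncard ≤ I.ncard := by
  have hHall := (hM I).1 hI.indep
  obtain ⟨T, hTI, hTR, hTmax⟩ := SetRel.exists_greatest_ncard_image_le hHall
  have hspan : ∀ y ∈ F \ I, R.image {y} ⊆ R.image T := by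
    intro y hy
    have hdef : ∃ U ⊆ insert y I, (R.image U).ncard < U.ncard := by
      simpa [hM] using (hI.insert_dep hy).not_indep
    obtain ⟨A, hAI, hAR, hyA⟩ :=
      SetRel.exists_ncard_image_le_image_singleton_subset hHall hdef
    exact hyA.trans (SetRel.image_subset_image (hTmax A hAI hAR))
  have hIT : I ⊆ T := hI.subset_of_sdiff_subset_closure hF hTI fun y hy =>
    mem_closure_of_image_singleton_subset hM (hI.indep.subset hTI) hTR
      (hI.subset_ground hy.1) (hspan y hy)
  refine ⟨?_, subset_antisymm hIT hTI ▸ hTR⟩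
  rintro b ⟨y, hyF, hyb⟩
  by_cases hyI : y ∈ I
  · exact ⟨y, hyI, hyb⟩
  · exact SetRel.image_subset_image hTI (hspan y ⟨hyF, hyI⟩ ⟨y, rfl, hyb⟩)

lemma UnionOfCircuits.ncard_image_lt
    (hM : ∀ S, M.Indep S ↔ ∀ U ⊆ S, U.ncard ≤ (R.image U).ncard)
    (hF : M.UnionOfCircuits F) (hne : F.Nonempty) : (R.image F).ncard < F.ncard := by
  have hdep := hF.dep hne
  obtain ⟨I, hI⟩ := M.exists_isBasis F hdep.subset_ground
  have hIF : I ⊂ F := hI.subset.ssubset_of_ne (by rintro rfl; exact hdep.not_indep hI.indep)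
  obtain ⟨hRF, hRI⟩ := image_subset_and_ncard_image_le_of_isBasis hM hF hI
  calc (R.image F).ncard ≤ (R.image I).ncard := ncard_le_ncard hRF (toFinite _)
    _ ≤ I.ncard := hRI
    _ < F.ncard := ncard_lt_ncard hIF (toFinite F)

lemma IsFlat.mem_of_image_singleton_subset
    (hM : ∀ S, M.Indep S ↔ ∀ U ⊆ S, U.ncard ≤ (R.image U).ncard)
    (hflat : M.IsFlat F) (hF : M.UnionOfCircuits F) (hx : x ∈ M.E)
    (hxF : R.image {x} ⊆ R.image F) : x ∈ F := by
  obtain ⟨I, hI⟩ := M.exists_isBasis F hflat.subset_ground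
  obtain ⟨hRF, hRI⟩ := image_subset_and_ncard_image_le_of_isBasis hM hF hI
  rw [← hflat.closure, ← hI.closure_eq_closure]
  exact mem_closure_of_image_singleton_subset hM hI.indep hRI hx (hxF.trans hRF)

end Matroid

section WilsonLoop

variable {n : ℕ} [NeZero n] {Ps P : Set (Fin n × Fin n)}

def propIncidence (n : ℕ) [NeZero n] (Ps : Set (Fin n × Fin n)) :
    SetRel (Fin n) (Fin n × Fin n) :=
  {xp | xp.2 ∈ Ps ∧ xp.1 ∈ Vp n xp.2}

lemma propsOf_eq_image (S : Set (Fin n)) : propsOf n Ps S = (propIncidence n Ps).image S := by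
  ext p
  simp only [propsOf, propIncidence, SetRel.image, mem_ofPred_eq, Set.Nonempty, mem_inter_iff]
  tauto

lemma mem_propsOf_singleton {x : Fin n} {p : Fin n × Fin n} :
    p ∈ propsOf n Ps {x} ↔ p ∈ Ps ∧ x ∈ Vp n p := by
  simp only [propsOf, mem_sep_iff, inter_singleton_nonempty]

lemma FP_eq_setOf_propsOf_singleton_subset (hcover : VP n Ps = univ) :
    FP n Ps P = {x | propsOf n Ps {x} ⊆ P} := by
  ext x
  simp only [FP, VP, mem_sdiff, mem_iUnion₂, mem_ofPred_eq, subset_def, mem_propsOf_singleton]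
  constructor
  · rintro ⟨-, hx⟩ p ⟨hp, hxp⟩
    by_contra hpP
    exact hx ⟨p, ⟨hp, hpP⟩, hxp⟩
  · intro hx
    obtain ⟨p, hp, hxp⟩ := mem_iUnion₂.1 (hcover ▸ mem_univ x : x ∈ VP n Ps)
    exact ⟨⟨p, hx p ⟨hp, hxp⟩, hxp⟩, fun ⟨q, ⟨hq, hqP⟩, hxq⟩ => hqP (hx q ⟨hq, hxq⟩)⟩

end WilsonLoop

theorem cyclic_flat_is_propagator_flat_general (n : ℕ) [NeZero n]
    (Ps : Set (Fin n × Fin n)) (hcover : VP n Ps = Set.univ)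
    (M : Matroid (Fin n)) (hME : M.E = Set.univ)
    (hMI : ∀ S : Set (Fin n), M.Indep S ↔ ∀ U ⊆ S, U.ncard ≤ (propsOf n Ps U).ncard)
    (F : Set (Fin n)) (hFne : F.Nonempty) (hflat : M.IsFlat F)
    (hcyc : M.UnionOfCircuits F) :
    (F = FP n Ps (propsOf n Ps F) ∧ (propsOf n Ps F).ncard < F.ncard) ∧
      ∃ P ⊆ Ps, F = FP n Ps P ∧ P.ncard < F.ncard := by
  simp only [propsOf_eq_image] at hMI
  have hlt : (propsOf n Ps F).ncard < F.ncard := by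
    rw [propsOf_eq_image]
    exact hcyc.ncard_image_lt hMI hFne
  have hFP : F = FP n Ps (propsOf n Ps F) := by
    rw [FP_eq_setOf_propsOf_singleton_subset hcover]
    ext x
    simp only [mem_ofPred_eq, propsOf_eq_image]
    exact ⟨fun hx => SetRel.image_subset_image (singleton_subset_iff.2 hx),
      hflat.mem_of_image_singleton_subset hMI hcyc (hME ▸ mem_univ x)⟩
  exact ⟨⟨hFP, hlt⟩, propsOf n Ps F, sep_subset _ _, hFP, hlt⟩

/-- In the matroid `M(W)` of a well-defined Wilson loop diagram with
`V_Ps = Fin n`, every nonempty cyclic flat `F` is a propagator flat `F = F(P)` with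
`|F| > |P|`; indeed one may take `P = Prop(F)`. -/
theorem cyclic_flat_is_propagator_flat (n : ℕ) [NeZero n]
    (Ps : Set (Fin n × Fin n)) (hW : WellDefinedWLD n Ps) (hcover : VP n Ps = Set.univ)
    (M : Matroid (Fin n)) (hME : M.E = Set.univ)
    (hMI : ∀ S : Set (Fin n), M.Indep S ↔ ∀ U ⊆ S, U.ncard ≤ (propsOf n Ps U).ncard)
    (F : Set (Fin n)) (hFne : F.Nonempty) (hflat : M.IsFlat F)
    (hcyc : M.UnionOfCircuits F) :
    (F = FP n Ps (propsOf n Ps F) ∧ (propsOf n Ps F).ncard < F.ncard) ∧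
      ∃ P ⊆ Ps, F = FP n Ps P ∧ P.ncard < F.ncard :=
  cyclic_flat_is_propagator_flat_general n Ps hcover M hME hMI F hFne hflat hcyc
end
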